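/- The limit inferior, as n → ∞, of ‖T_n‖/√n is at least 1, where ‖·‖ denotes the ℓ²-operator norm. -/

import Mathlib

/-!
For `k, l ≤ ⌊√n⌋ - 1` we have `k (k + 1) ≤ n`, which puts `k` in `S_n`, and `k l ≤ n`; so `T_n`
has an all-ones principal block of size `⌊√n⌋ - 1`, and testing `T_n` against the indicator
vector of that block gives `‖T_n‖ ≥ √n - 2`.

A real `liminf` is junk unless the sequence is bounded above along the filter, so we also need
`‖T_n‖ ≤ 2√n`: an element `k > √n` of `S_n` equals `n / (n / k)` with `n / k ≤ √n`, whence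
`|S_n| ≤ 2√n`, and a matrix with entries in `[-1, 1]` has norm at most its size.
-/

open Matrix

noncomputable section

/-- `Sn n` is the set of largest representatives of the finite classes of the
equivalence relation `i ~ j ↔ n / i = n / j` on positive integers. -/
def Sn (n : ℕ) : Finset ℕ := (Finset.Icc 1 n).filter (fun k => n / (k + 1) < n / k)

/-- The matrix `T_n` over `ℝ`, indexed by `S_n`. -/
def Tmat (n : ℕ) : Matrix (Sn n) (Sn n) ℝ :=
  fun k l => if (k : ℕ) * (l : ℕ) ≤ n then 1 else 0

/-- The ℓ²-operator norm of a real square matrix. -/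
def opNorm {m : Type*} [Fintype m] [DecidableEq m] (A : Matrix m m ℝ) : ℝ :=
  ‖Matrix.toEuclideanCLM (𝕜 := ℝ) A‖

open Finset Filter Topology

namespace Matrix

variable {ι : Type*} [Fintype ι] [DecidableEq ι]

theorem card_le_norm_toEuclideanCLM_of_eq_one (A : Matrix ι ι ℝ) (s : Finset ι)
    (hA : ∀ i ∈ s, ∀ j ∈ s, A i j = 1) :
    (#s : ℝ) ≤ ‖toEuclideanCLM (𝕜 := ℝ) A‖ := by
  rcases s.eq_empty_or_nonempty with rfl | hs
  · simp
  set T := toEuclideanCLM (𝕜 := ℝ) A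
  set v : EuclideanSpace ℝ ι := WithLp.toLp 2 (fun i => if i ∈ s then 1 else 0)
  have hv : ‖v‖ ^ 2 = #s := by
    simp [EuclideanSpace.real_norm_sq_eq, v, ite_pow]
  have hTv : inner ℝ v (T v) = (#s : ℝ) ^ 2 := by
    rw [inner_toEuclideanCLM]
    simp only [v, dotProduct, mulVec, ite_mul, one_mul, zero_mul, mul_ite, mul_one, mul_zero,
      sum_ite_mem, univ_inter]
    rw [sum_congr rfl fun i hi => sum_congr rfl fun j hj => hA i hi j hj]
    simp [sq]
  have key : (#s : ℝ) * #s ≤ ‖T‖ * #s :=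
    calc (#s : ℝ) * #s = inner ℝ v (T v) := by rw [hTv, sq]
      _ ≤ ‖v‖ * ‖T v‖ := real_inner_le_norm v (T v)
      _ ≤ ‖v‖ * (‖T‖ * ‖v‖) := by gcongr; exact T.le_opNorm v
      _ = ‖T‖ * #s := by rw [← hv]; ring
  exact le_of_mul_le_mul_right key (by simpa using hs)

theorem norm_toEuclideanCLM_le_card_of_abs_le_one (A : Matrix ι ι ℝ)
    (hA : ∀ i j, |A i j| ≤ 1) :
    ‖toEuclideanCLM (𝕜 := ℝ) A‖ ≤ Fintype.card ι := by
  refine ContinuousLinearMap.opNorm_le_bound _ (by positivity) fun v => ?_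
  refine (pow_le_pow_iff_left₀ (norm_nonneg _) (by positivity) two_ne_zero).1 ?_
  have hrow : ∀ i, (∑ j, A i j * v j) ^ 2 ≤ Fintype.card ι * ∑ j, v j ^ 2 := fun i =>
    calc (∑ j, A i j * v j) ^ 2 ≤ Fintype.card ι * ∑ j, (A i j * v j) ^ 2 := by
          simpa using sq_sum_le_card_mul_sum_sq (s := univ) (f := fun j => A i j * v j)
      _ ≤ Fintype.card ι * ∑ j, v j ^ 2 := by
          gcongr ?_ * ?_
          refine sum_le_sum fun j _ => ?_
          rw [mul_pow, ← sq_abs (A i j)]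
          exact mul_le_of_le_one_left (sq_nonneg _) (pow_le_one₀ (abs_nonneg _) (hA i j))
  calc ‖toEuclideanCLM (𝕜 := ℝ) A v‖ ^ 2 = ∑ i, (∑ j, A i j * v j) ^ 2 := by
        simp [EuclideanSpace.real_norm_sq_eq, mulVec, dotProduct]
    _ ≤ ∑ _i : ι, Fintype.card ι * ∑ j, v j ^ 2 := sum_le_sum fun i _ => hrow i
    _ = (Fintype.card ι * ‖v‖) ^ 2 := by
        simp [EuclideanSpace.real_norm_sq_eq, mul_pow]; ring

end Matrix

theorem mem_Sn_of_mul_succ_le {n k : ℕ} (hk : 1 ≤ k) (h : k * (k + 1) ≤ n) : k ∈ Sn n := by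
  have hkn : k ≤ n := (Nat.le_mul_of_pos_right k k.succ_pos).trans h
  refine mem_filter.2 ⟨mem_Icc.2 ⟨hk, hkn⟩, ?_⟩
  have hq : k ≤ n / (k + 1) := (Nat.le_div_iff_mul_le k.succ_pos).2 h
  have hmul : (n / (k + 1) + 1) * k ≤ n := by nlinarith [Nat.div_mul_le_self n (k + 1)]
  exact (Nat.le_div_iff_mul_le hk).2 hmul

theorem Icc_one_sqrt_sub_one_subset_Sn (n : ℕ) : Icc 1 (Nat.sqrt n - 1) ⊆ Sn n := by
  intro k hk
  obtain ⟨hk1, hkm⟩ := mem_Icc.1 hk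
  refine mem_Sn_of_mul_succ_le hk1
    ((Nat.mul_le_mul hkm (by omega : k + 1 ≤ Nat.sqrt n)).trans ?_)
  exact (Nat.mul_le_mul_right _ (Nat.sub_le _ _)).trans (Nat.sqrt_le n)

theorem div_div_of_mem_Sn {n k : ℕ} (hk : k ∈ Sn n) : n / (n / k) = k := by
  obtain ⟨-, hlt⟩ := mem_filter.1 hk
  have hpos : 0 < n / k := (Nat.zero_le _).trans_lt hlt
  refine le_antisymm ?_ ((Nat.le_div_iff_mul_le hpos).2 (Nat.mul_div_le n k))
  rw [← Nat.lt_succ_iff, Nat.div_lt_iff_lt_mul hpos]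
  calc n < (k + 1) * (n / (k + 1) + 1) := Nat.lt_mul_div_succ n k.succ_pos
    _ ≤ (k + 1) * (n / k) := by gcongr; exact hlt

theorem Sn_subset_Icc_union_image_div (n : ℕ) :
    Sn n ⊆ Icc 1 (Nat.sqrt n) ∪ (Icc 1 (Nat.sqrt n)).image (n / ·) := by
  intro k hk
  obtain ⟨hkI, hlt⟩ := mem_filter.1 hk
  rcases le_or_gt k (Nat.sqrt n) with hks | hks
  · exact mem_union_left _ (mem_Icc.2 ⟨(mem_Icc.1 hkI).1, hks⟩)
  refine mem_union_right _ (mem_image.2 ⟨n / k, mem_Icc.2 ⟨?_, ?_⟩, div_div_of_mem_Sn hk⟩)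
  · exact (Nat.zero_le _).trans_lt hlt
  · rw [← Nat.lt_succ_iff, Nat.div_lt_iff_lt_mul (by omega)]
    exact (Nat.lt_succ_sqrt n).trans_le (Nat.mul_le_mul_left _ hks)

theorem card_Sn_le (n : ℕ) : #(Sn n) ≤ 2 * Nat.sqrt n :=
  calc #(Sn n) ≤ #(Icc 1 (Nat.sqrt n) ∪ (Icc 1 (Nat.sqrt n)).image (n / ·)) :=
        card_le_card (Sn_subset_Icc_union_image_div n)
    _ ≤ Nat.sqrt n + Nat.sqrt n :=
        (card_union_le _ _).trans (by simpa using card_image_le (s := Icc 1 (Nat.sqrt n)))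
    _ = 2 * Nat.sqrt n := by ring

theorem sqrt_sub_two_le_opNorm_Tmat (n : ℕ) : √(n : ℝ) - 2 ≤ opNorm (Tmat n) := by
  set m := Nat.sqrt n - 1
  set s : Finset (Sn n) := (Icc 1 m).subtype (· ∈ Sn n)
  have hblock : ∀ k ∈ s, ∀ l ∈ s, Tmat n k l = 1 := by
    intro k hk l hl
    have hkm : (k : ℕ) ≤ Nat.sqrt n := by have := (mem_Icc.1 (mem_subtype.1 hk)).2; omega
    have hlm : (l : ℕ) ≤ Nat.sqrt n := by have := (mem_Icc.1 (mem_subtype.1 hl)).2; omega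
    exact if_pos ((Nat.mul_le_mul hkm hlm).trans (Nat.sqrt_le n))
  have hcard : #s = m := by
    rw [card_subtype, filter_true_of_mem (Icc_one_sqrt_sub_one_subset_Sn n), Nat.card_Icc,
      Nat.add_sub_cancel]
  have hm : √(n : ℝ) - 2 ≤ m := by
    have : (Nat.sqrt n : ℝ) ≤ m + 1 := by exact_mod_cast (by omega : Nat.sqrt n ≤ m + 1)
    linarith [Real.real_sqrt_lt_nat_sqrt_succ (a := n)]
  have hblock_le := (Tmat n).card_le_norm_toEuclideanCLM_of_eq_one s hblock
  rw [hcard] at hblock_le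
  exact hm.trans hblock_le

theorem opNorm_Tmat_le (n : ℕ) : opNorm (Tmat n) ≤ 2 * √(n : ℝ) :=
  calc opNorm (Tmat n) ≤ #(Sn n) := by
        simpa [opNorm] using (Tmat n).norm_toEuclideanCLM_le_card_of_abs_le_one fun k l => by
          unfold Tmat; split_ifs <;> simp
    _ ≤ 2 * Nat.sqrt n := by exact_mod_cast card_Sn_le n
    _ ≤ 2 * √(n : ℝ) := by gcongr; exact Real.nat_sqrt_le_real_sqrt

theorem stmt3 :
    1 ≤ Filter.liminf (fun n : ℕ => opNorm (Tmat n) / Real.sqrt n) Filter.atTop := by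
  have hsqrt : Tendsto (fun n : ℕ => √(n : ℝ)) atTop atTop :=
    Real.tendsto_sqrt_atTop.comp tendsto_natCast_atTop_atTop
  have hlim : Tendsto (fun n : ℕ => 1 - 2 / √(n : ℝ)) atTop (𝓝 1) := by
    simpa using tendsto_const_nhds.sub (tendsto_const_nhds.div_atTop hsqrt)
  have hpos : ∀ᶠ n : ℕ in atTop, 0 < √(n : ℝ) := hsqrt.eventually_gt_atTop 0
  have hlower : ∀ᶠ n : ℕ in atTop, 1 - 2 / √(n : ℝ) ≤ opNorm (Tmat n) / √n := by
    filter_upwards [hpos] with n hn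
    rw [← div_self hn.ne', ← sub_div]
    exact div_le_div_of_nonneg_right (sqrt_sub_two_le_opNorm_Tmat n) hn.le
  have hupper : ∀ᶠ n : ℕ in atTop, opNorm (Tmat n) / √n ≤ 2 := by
    filter_upwards [hpos] with n hn
    exact (div_le_iff₀ hn).2 (opNorm_Tmat_le n)
  calc 1 = liminf (fun n : ℕ => 1 - 2 / √(n : ℝ)) atTop := hlim.liminf_eq.symm
    _ ≤ _ := liminf_le_liminf hlower hlim.isBoundedUnder_ge
      (isCoboundedUnder_ge_of_eventually_le _ hupper)
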